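/- arXiv:1411.6950 — 3 statements merged into one kernel-verified Lean document; each statement's English description precedes it below -/
import Mathlib

section
/- Let ν₀ be a common multiple of the dilation weights υ₁,…,υₙ of a graded Lie group G and let s ∈ ν₀ℕ. Then σ ∈ H^s(Ĝ) if and only if Δ_{x^α} σ ∈ L²(Ĝ) for all multi-indices α with homogeneous degree [α] = Σ υ_j α_j ≤ s; moreover Σ_{[α]≤s} ‖Δ_{x^α} σ‖_{L²(Ĝ)} is an equivalent norm on H^s(Ĝ). -/
open MeasureTheory ENNReal

/-- The homogeneous quasi-norm `|x|_{ν₀} = (∑_j x_j^{2ν₀/υ_j})^{1/(2ν₀)}` on `ℝⁿ`. -/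
noncomputable def gradedQuasiNorm (n : ℕ) (υ : Fin n → ℕ) (ν₀ : ℕ) (x : Fin n → ℝ) : ℝ :=
  (∑ j, x j ^ (2 * (ν₀ / υ j))) ^ ((2 * (ν₀ : ℝ))⁻¹)

/-- The monomial `x^α = x₁^{α₁} ⋯ xₙ^{αₙ}`. -/
def gradedMonomial (n : ℕ) (α : Fin n → ℕ) (x : Fin n → ℝ) : ℝ :=
  ∏ j, x j ^ α j

/-- The finite set of multi-indices of homogeneous degree `[α] = ∑ υ_j α_j ≤ s`. -/
def gradedMultiIndices (n : ℕ) (υ : Fin n → ℕ) (s : ℕ) : Finset (Fin n → ℕ) :=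
  Finset.filter (fun α : Fin n → ℕ => (∑ j, υ j * α j) ≤ s)
    (Fintype.piFinset fun _ => Finset.range (s + 1))

/-!
Since `ν₀` is a multiple of every weight, `|x|^{2ν₀} = ∑_j x_j^{2ν₀/υ_j}` is a polynomial. This gives
`|x_j| ≤ |x|^{υ_j}`, hence `|x^α| ≤ (1 + |x|)^s` whenever `[α] ≤ s`; conversely, `|x|^{ν₀}` is at most
`∑_j |x_j|^{ν₀/υ_j}`, and raising this to the power `s/ν₀` bounds `(1 + |x|)^s` by a multiple of
`∑_{[α]≤s} |x^α|`. Multiplying these two pointwise comparisons by `|κ|` and taking `L²` norms gives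
both the equivalence of memberships and the equivalence of norms.
-/

open Finset

section PointwiseDomination

variable {X ι E F : Type*} [MeasurableSpace X] {μ : Measure X} {p : ℝ≥0∞}
  [NormedAddCommGroup E] [NormedAddCommGroup F]

theorem eLpNorm_le_ofReal_mul_sum_of_norm_le (hp : 1 ≤ p) {s : Finset ι} {g : X → E}
    {h : ι → X → F} (hh : ∀ i ∈ s, AEStronglyMeasurable (h i) μ) {C : ℝ} (hC : 0 ≤ C)
    (hgh : ∀ x, ‖g x‖ ≤ C * ∑ i ∈ s, ‖h i x‖) :
    eLpNorm g p μ ≤ ENNReal.ofReal C * ∑ i ∈ s, eLpNorm (h i) p μ := by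
  calc eLpNorm g p μ ≤ eLpNorm (C • ∑ i ∈ s, fun x => ‖h i x‖) p μ :=
        eLpNorm_mono_real fun x => by simpa using hgh x
    _ = ENNReal.ofReal C * eLpNorm (∑ i ∈ s, fun x => ‖h i x‖) p μ := by
        rw [eLpNorm_const_smul, Real.enorm_eq_ofReal hC]
    _ ≤ ENNReal.ofReal C * ∑ i ∈ s, eLpNorm (h i) p μ := by
        gcongr
        refine (eLpNorm_sum_le (fun i hi => (hh i hi).norm) hp).trans_eq ?_
        simp only [eLpNorm_norm]

theorem MeasureTheory.MemLp.of_norm_le_mul_sum {s : Finset ι} {g : X → E} {h : ι → X → F}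
    (hh : ∀ i ∈ s, MemLp (h i) p μ) (hg : AEStronglyMeasurable g μ) (C : ℝ)
    (hgh : ∀ x, ‖g x‖ ≤ C * ∑ i ∈ s, ‖h i x‖) : MemLp g p μ :=
  ((memLp_finsetSum s fun i hi => (hh i hi).norm).const_mul C).of_le hg
    (.of_forall fun x => (hgh x).trans (Real.le_norm_self _))

variable [NormedSpace ℝ E]

theorem memLp_smul_iff_and_eLpNorm_equiv_of_abs_le (hp : 1 ≤ p) {s : Finset ι} {w : X → ℝ}
    {f : ι → X → ℝ} (hw : AEStronglyMeasurable w μ) (hf : ∀ i ∈ s, AEStronglyMeasurable (f i) μ)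
    {C : ℝ} (hC : 0 ≤ C) (hfw : ∀ i ∈ s, ∀ x, |f i x| ≤ |w x|)
    (hwf : ∀ x, |w x| ≤ C * ∑ i ∈ s, |f i x|) {κ : X → E} (hκ : AEStronglyMeasurable κ μ) :
    (MemLp (fun x => w x • κ x) p μ ↔ ∀ i ∈ s, MemLp (fun x => f i x • κ x) p μ) ∧
      eLpNorm (fun x => w x • κ x) p μ
        ≤ ENNReal.ofReal C * ∑ i ∈ s, eLpNorm (fun x => f i x • κ x) p μ ∧
      ∑ i ∈ s, eLpNorm (fun x => f i x • κ x) p μ ≤ #s * eLpNorm (fun x => w x • κ x) p μ := by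
  have hfκ : ∀ i ∈ s, ∀ x, ‖f i x • κ x‖ ≤ ‖w x • κ x‖ := fun i hi x => by
    simp only [norm_smul, Real.norm_eq_abs]
    exact mul_le_mul_of_nonneg_right (hfw i hi x) (norm_nonneg _)
  have hwκ : ∀ x, ‖w x • κ x‖ ≤ C * ∑ i ∈ s, ‖f i x • κ x‖ := fun x => by
    simp only [norm_smul, Real.norm_eq_abs, ← sum_mul, ← mul_assoc]
    exact mul_le_mul_of_nonneg_right (hwf x) (norm_nonneg _)
  refine ⟨⟨fun hwmem i hi => hwmem.of_le ((hf i hi).smul hκ) (.of_forall (hfκ i hi)),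
      fun hfmem => .of_norm_le_mul_sum hfmem (hw.smul hκ) C hwκ⟩,
    eLpNorm_le_ofReal_mul_sum_of_norm_le hp (fun i hi => (hf i hi).smul hκ) hC hwκ, ?_⟩
  calc ∑ i ∈ s, eLpNorm (fun x => f i x • κ x) p μ
      ≤ ∑ _i ∈ s, eLpNorm (fun x => w x • κ x) p μ :=
        sum_le_sum fun i hi => eLpNorm_mono (hfκ i hi)
    _ = #s * eLpNorm (fun x => w x • κ x) p μ := by rw [sum_const, nsmul_eq_mul]

end PointwiseDomination

section Graded

variable {n : ℕ} {υ : Fin n → ℕ} {ν₀ : ℕ}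

theorem measurable_gradedMonomial (α : Fin n → ℕ) : Measurable (gradedMonomial n α) := by
  unfold gradedMonomial
  fun_prop

theorem gradedMonomial_zero (x : Fin n → ℝ) : gradedMonomial n 0 x = 1 := by
  simp [gradedMonomial]

theorem gradedMonomial_single (j : Fin n) (d : ℕ) (x : Fin n → ℝ) :
    gradedMonomial n (Pi.single j d) x = x j ^ d := by
  rw [gradedMonomial, prod_eq_single j (fun i _ hij => by simp [hij]) (by simp)]
  simp

theorem zero_mem_gradedMultiIndices (s : ℕ) : 0 ∈ gradedMultiIndices n υ s := by
  simp [gradedMultiIndices]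

theorem single_mem_gradedMultiIndices {s : ℕ} {j : Fin n} {d : ℕ} (hj : 0 < υ j)
    (hd : υ j * d ≤ s) : Pi.single j d ∈ gradedMultiIndices n υ s := by
  have hsum : ∑ i, υ i * (Pi.single j d : Fin n → ℕ) i = υ j * d := by
    rw [sum_eq_single j (fun i _ hij => by simp [hij]) (by simp)]
    simp
  refine mem_filter.2 ⟨Fintype.mem_piFinset.2 fun i => ?_, hsum ▸ hd⟩
  rcases eq_or_ne i j with rfl | hij
  · simp only [Pi.single_eq_same, mem_range]
    nlinarith
  · simp [hij]

theorem measurable_gradedQuasiNorm : Measurable (gradedQuasiNorm n υ ν₀) := by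
  unfold gradedQuasiNorm
  fun_prop

theorem gradedQuasiNorm_nonneg (x : Fin n → ℝ) : 0 ≤ gradedQuasiNorm n υ ν₀ x :=
  Real.rpow_nonneg (sum_nonneg fun _ _ => (even_two_mul _).pow_nonneg _) _

theorem gradedQuasiNorm_pow_two_mul (hν₀ : ν₀ ≠ 0) (x : Fin n → ℝ) :
    gradedQuasiNorm n υ ν₀ x ^ (2 * ν₀) = ∑ j, x j ^ (2 * (ν₀ / υ j)) := by
  have h : ((2 * ν₀ : ℕ) : ℝ) = 2 * (ν₀ : ℝ) := by push_cast; ring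
  rw [gradedQuasiNorm, ← h]
  exact Real.rpow_inv_natCast_pow (sum_nonneg fun _ _ => (even_two_mul _).pow_nonneg _)
    (by omega)

theorem gradedQuasiNorm_pow_le_sum (hν₀ : ν₀ ≠ 0) (x : Fin n → ℝ) :
    gradedQuasiNorm n υ ν₀ x ^ ν₀ ≤ ∑ j, |x j| ^ (ν₀ / υ j) := by
  refine le_of_pow_le_pow_left₀ two_ne_zero (sum_nonneg fun _ _ => by positivity) ?_
  calc (gradedQuasiNorm n υ ν₀ x ^ ν₀) ^ 2 = ∑ j, (|x j| ^ (ν₀ / υ j)) ^ 2 := by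
        simp only [← pow_mul, mul_comm _ 2, gradedQuasiNorm_pow_two_mul hν₀,
          (even_two_mul _).pow_abs]
    _ ≤ (∑ j, |x j| ^ (ν₀ / υ j)) ^ 2 := sum_sq_le_sq_sum_of_nonneg fun _ _ => by positivity

theorem abs_le_gradedQuasiNorm_pow (hν₀ : 0 < ν₀) {j : Fin n} (hj : υ j ∣ ν₀) (x : Fin n → ℝ) :
    |x j| ≤ gradedQuasiNorm n υ ν₀ x ^ υ j := by
  have hk : ν₀ / υ j ≠ 0 :=
    (Nat.div_pos (Nat.le_of_dvd hν₀ hj) (Nat.pos_of_dvd_of_pos hj hν₀)).ne'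
  refine le_of_pow_le_pow_left₀ (mul_ne_zero two_ne_zero hk)
    (pow_nonneg (gradedQuasiNorm_nonneg x) _) ?_
  calc |x j| ^ (2 * (ν₀ / υ j)) = x j ^ (2 * (ν₀ / υ j)) := (even_two_mul _).pow_abs _
    _ ≤ ∑ i, x i ^ (2 * (ν₀ / υ i)) :=
        single_le_sum (f := fun i => x i ^ (2 * (ν₀ / υ i)))
          (fun i _ => (even_two_mul _).pow_nonneg _) (mem_univ j)
    _ = (gradedQuasiNorm n υ ν₀ x ^ υ j) ^ (2 * (ν₀ / υ j)) := by
        rw [← pow_mul, ← gradedQuasiNorm_pow_two_mul hν₀.ne', mul_left_comm,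
          Nat.mul_div_cancel' hj]

theorem abs_gradedMonomial_le (hν₀ : 0 < ν₀) (hdvd : ∀ j, υ j ∣ ν₀) (α : Fin n → ℕ)
    (x : Fin n → ℝ) :
    |gradedMonomial n α x| ≤ gradedQuasiNorm n υ ν₀ x ^ ∑ j, υ j * α j := by
  rw [gradedMonomial, abs_prod, ← prod_pow_eq_pow_sum]
  simp only [abs_pow, pow_mul]
  exact prod_le_prod (fun j _ => by positivity)
    (fun j _ => pow_le_pow_left₀ (abs_nonneg _) (abs_le_gradedQuasiNorm_pow hν₀ (hdvd j) x) _)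

theorem abs_gradedMonomial_le_one_add_pow (hν₀ : 0 < ν₀) (hdvd : ∀ j, υ j ∣ ν₀) {s : ℕ}
    {α : Fin n → ℕ} (hα : α ∈ gradedMultiIndices n υ s) (x : Fin n → ℝ) :
    |gradedMonomial n α x| ≤ (1 + gradedQuasiNorm n υ ν₀ x) ^ s := by
  have hQ := gradedQuasiNorm_nonneg (υ := υ) (ν₀ := ν₀) x
  calc |gradedMonomial n α x| ≤ gradedQuasiNorm n υ ν₀ x ^ ∑ j, υ j * α j :=
        abs_gradedMonomial_le hν₀ hdvd α x
    _ ≤ (1 + gradedQuasiNorm n υ ν₀ x) ^ ∑ j, υ j * α j := by gcongr; linarith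
    _ ≤ (1 + gradedQuasiNorm n υ ν₀ x) ^ s :=
        pow_le_pow_right₀ (by linarith) (mem_filter.1 hα).2

theorem gradedQuasiNorm_pow_le_card_pow_mul_sum (hν₀ : 0 < ν₀) (hdvd : ∀ j, υ j ∣ ν₀) {m : ℕ}
    (hm : m ≠ 0) (x : Fin n → ℝ) :
    gradedQuasiNorm n υ ν₀ x ^ (ν₀ * m)
      ≤ n ^ m * ∑ α ∈ gradedMultiIndices n υ (ν₀ * m), |gradedMonomial n α x| := by
  set S := ∑ α ∈ gradedMultiIndices n υ (ν₀ * m), |gradedMonomial n α x|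
  -- `|x_j|^{(ν₀/υ_j) m}` is the monomial of the multi-index `(ν₀/υ_j) m • e_j`, of degree `ν₀ m`.
  have hcoord : ∀ j, (|x j| ^ (ν₀ / υ j)) ^ m ≤ S := fun j => by
    have hmem : Pi.single j (ν₀ / υ j * m) ∈ gradedMultiIndices n υ (ν₀ * m) :=
      single_mem_gradedMultiIndices (Nat.pos_of_dvd_of_pos (hdvd j) hν₀)
        (by rw [← mul_assoc, Nat.mul_div_cancel' (hdvd j)])
    calc (|x j| ^ (ν₀ / υ j)) ^ m = |gradedMonomial n (Pi.single j (ν₀ / υ j * m)) x| := by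
          rw [gradedMonomial_single, abs_pow, pow_mul]
      _ ≤ S := single_le_sum (fun α _ => abs_nonneg (gradedMonomial n α x)) hmem
  obtain ⟨m, rfl⟩ := Nat.exists_eq_succ_of_ne_zero hm
  calc gradedQuasiNorm n υ ν₀ x ^ (ν₀ * (m + 1))
      = (gradedQuasiNorm n υ ν₀ x ^ ν₀) ^ (m + 1) := pow_mul _ _ _
    _ ≤ (∑ j, |x j| ^ (ν₀ / υ j)) ^ (m + 1) := by
        gcongr
        · exact pow_nonneg (gradedQuasiNorm_nonneg x) _
        · exact gradedQuasiNorm_pow_le_sum hν₀.ne' x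
    _ ≤ n ^ m * ∑ j, (|x j| ^ (ν₀ / υ j)) ^ (m + 1) := by
        simpa using pow_sum_le_card_mul_sum_pow (s := univ) (f := fun j => |x j| ^ (ν₀ / υ j))
          (fun j _ => by positivity) m
    _ ≤ n ^ m * (n * S) := by
        gcongr
        simpa using sum_le_card_nsmul univ _ S fun j _ => hcoord j
    _ = n ^ (m + 1) * S := by ring

theorem one_add_gradedQuasiNorm_pow_le (hν₀ : 0 < ν₀) (hdvd : ∀ j, υ j ∣ ν₀) {m : ℕ}
    (hm : m ≠ 0) (x : Fin n → ℝ) :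
    (1 + gradedQuasiNorm n υ ν₀ x) ^ (ν₀ * m)
      ≤ 2 ^ (ν₀ * m - 1) * (1 + n ^ m) *
        ∑ α ∈ gradedMultiIndices n υ (ν₀ * m), |gradedMonomial n α x| := by
  set S := ∑ α ∈ gradedMultiIndices n υ (ν₀ * m), |gradedMonomial n α x|
  have hS : 1 ≤ S := by
    simpa [gradedMonomial_zero] using
      single_le_sum (fun α _ => abs_nonneg (gradedMonomial n α x))
        (zero_mem_gradedMultiIndices (υ := υ) (ν₀ * m))
  calc (1 + gradedQuasiNorm n υ ν₀ x) ^ (ν₀ * m)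
      ≤ 2 ^ (ν₀ * m - 1) * (1 ^ (ν₀ * m) + gradedQuasiNorm n υ ν₀ x ^ (ν₀ * m)) :=
        add_pow_le zero_le_one (gradedQuasiNorm_nonneg x) _
    _ ≤ 2 ^ (ν₀ * m - 1) * (S + n ^ m * S) := by
        gcongr
        · simpa using hS
        · exact gradedQuasiNorm_pow_le_card_pow_mul_sum hν₀ hdvd hm x
    _ = 2 ^ (ν₀ * m - 1) * (1 + n ^ m) * S := by ring

end Graded

theorem sobolev_dual_integer_exponent_equivalent_norm_general
    (n : ℕ) (υ : Fin n → ℕ)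
    (ν₀ : ℕ) (hν₀ : 0 < ν₀) (hdvd : ∀ j, υ j ∣ ν₀)
    (s : ℕ) (hs : 0 < s) (hsdvd : ν₀ ∣ s) :
    ∃ C > 0, ∀ κ : (Fin n → ℝ) → ℂ, Measurable κ →
      (MemLp (fun x => (((1 + gradedQuasiNorm n υ ν₀ x) ^ (s : ℝ) : ℝ)) * κ x) 2 volume ↔
        ∀ α ∈ gradedMultiIndices n υ s,
          MemLp (fun x => (gradedMonomial n α x : ℝ) * κ x) 2 volume) ∧
      eLpNorm (fun x => (((1 + gradedQuasiNorm n υ ν₀ x) ^ (s : ℝ) : ℝ)) * κ x) 2 volume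
        ≤ ENNReal.ofReal C * ∑ α ∈ gradedMultiIndices n υ s,
            eLpNorm (fun x => (gradedMonomial n α x : ℝ) * κ x) 2 volume ∧
      ∑ α ∈ gradedMultiIndices n υ s,
          eLpNorm (fun x => (gradedMonomial n α x : ℝ) * κ x) 2 volume
        ≤ ENNReal.ofReal C *
            eLpNorm (fun x => (((1 + gradedQuasiNorm n υ ν₀ x) ^ (s : ℝ) : ℝ)) * κ x) 2 volume := by
  obtain ⟨m, rfl⟩ := hsdvd
  have hm : m ≠ 0 := by rintro rfl; simp at hs
  set C₀ : ℝ := 2 ^ (ν₀ * m - 1) * (1 + n ^ m)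
  have hweight : ∀ x, |(1 + gradedQuasiNorm n υ ν₀ x) ^ ((ν₀ * m : ℕ) : ℝ)|
      = (1 + gradedQuasiNorm n υ ν₀ x) ^ (ν₀ * m) := fun x => by
    have hQ := gradedQuasiNorm_nonneg (υ := υ) (ν₀ := ν₀) x
    rw [Real.rpow_natCast]
    exact abs_of_nonneg (pow_nonneg (by linarith) _)
  refine ⟨max C₀ #(gradedMultiIndices n υ (ν₀ * m)), lt_max_of_lt_left (by positivity),
    fun κ hκ => ?_⟩
  obtain ⟨hiff, hupper, hlower⟩ := memLp_smul_iff_and_eLpNorm_equiv_of_abs_le one_le_two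
    (w := fun x => (1 + gradedQuasiNorm n υ ν₀ x) ^ ((ν₀ * m : ℕ) : ℝ))
    ((measurable_gradedQuasiNorm.const_add 1).pow_const _).aestronglyMeasurable
    (fun α _ => (measurable_gradedMonomial α).aestronglyMeasurable) (by positivity : 0 ≤ C₀)
    (fun α hα x => (hweight x).symm ▸ abs_gradedMonomial_le_one_add_pow hν₀ hdvd hα x)
    (fun x => (hweight x).symm ▸ one_add_gradedQuasiNorm_pow_le hν₀ hdvd hm x)
    (μ := volume) hκ.aestronglyMeasurable
  simp only [Complex.real_smul] at hiff hupper hlower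
  refine ⟨hiff, hupper.trans ?_, hlower.trans ?_⟩
  · gcongr
    exact le_max_left _ _
  · rw [← ENNReal.ofReal_natCast]
    gcongr
    exact le_max_right _ _

/-- For `s ∈ ν₀ℕ`, `ν₀` a common multiple of the dilation weights
`υ₁,…,υₙ` of a graded Lie group `G ≅ ℝⁿ`, the Sobolev space `H^s(Ĝ)` (viewed on the
spatial side via Plancherel with kernel `κ = ℱ_G⁻¹σ`): `σ ∈ H^s(Ĝ)` iff
`Δ_{x^α}σ ∈ L²(Ĝ)` (i.e. `x^α κ ∈ L²`) for all `α` with `[α] ≤ s`; moreover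
`∑_{[α]≤s} ‖Δ_{x^α}σ‖_{L²(Ĝ)}` is an equivalent norm on `H^s(Ĝ)`. -/
theorem sobolev_dual_integer_exponent_equivalent_norm
    (n : ℕ) (υ : Fin n → ℕ) (hυ : ∀ j, 1 ≤ υ j)
    (ν₀ : ℕ) (hν₀ : 0 < ν₀) (hdvd : ∀ j, υ j ∣ ν₀)
    (s : ℕ) (hs : 0 < s) (hsdvd : ν₀ ∣ s) :
    ∃ C > 0, ∀ κ : (Fin n → ℝ) → ℂ, Measurable κ →
      (MemLp (fun x => (((1 + gradedQuasiNorm n υ ν₀ x) ^ (s : ℝ) : ℝ)) * κ x) 2 volume ↔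
        ∀ α ∈ gradedMultiIndices n υ s,
          MemLp (fun x => (gradedMonomial n α x : ℝ) * κ x) 2 volume) ∧
      eLpNorm (fun x => (((1 + gradedQuasiNorm n υ ν₀ x) ^ (s : ℝ) : ℝ)) * κ x) 2 volume
        ≤ ENNReal.ofReal C * ∑ α ∈ gradedMultiIndices n υ s,
            eLpNorm (fun x => (gradedMonomial n α x : ℝ) * κ x) 2 volume ∧
      ∑ α ∈ gradedMultiIndices n υ s,
          eLpNorm (fun x => (gradedMonomial n α x : ℝ) * κ x) 2 volume
        ≤ ENNReal.ofReal C *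
            eLpNorm (fun x => (((1 + gradedQuasiNorm n υ ν₀ x) ^ (s : ℝ) : ℝ)) * κ x) 2 volume :=
  sobolev_dual_integer_exponent_equivalent_norm_general n υ ν₀ hν₀ hdvd s hs hsdvd
end

section
/- For σ, τ ∈ H^s(Ĝ), the pointwise operator product στ = {σ(π)τ(π)} satisfies ‖στ‖_{H^s} ≤ C(‖σ‖_{H^s}‖ℱ_G⁻¹τ‖_{L¹(G)} + ‖ℱ_G⁻¹σ‖_{L¹(G)}‖τ‖_{H^s}) with C independent of σ, τ. Consequently, for s > Q/2, H^s(Ĝ) is a (non-commutative) algebra under this product. -/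
/-!
Writing `f = ℱ_G⁻¹σ` and `g = ℱ_G⁻¹τ`, the kernel of `στ` is the group convolution `g ∗ f` and
`‖σ‖_{H^s} = ‖ω f‖_{L²}` with `ω = (1 + |·|)^s`. The quasi-triangle inequality gives the
Peetre-type bound `ω x ≤ (2c)^s (ω y + ω (y⁻¹x))`, which splits `ω · (g ∗ f)` pointwise into
`(ω g) ∗ f + g ∗ (ω f)`. Young's inequalities `‖u ∗ v‖_{L²} ≤ ‖u‖_{L²} ‖v‖_{L¹}` and
`‖u ∗ v‖_{L²} ≤ ‖u‖_{L¹} ‖v‖_{L²}` then bound the two pieces; the first one needs `μ` to be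
invariant under inversion, which holds for any σ-finite bi-invariant measure.
For `s > Q/2` the weight `ω⁻¹` lies in `L²`, so by Cauchy–Schwarz `ω f ∈ L²` forces `f ∈ L¹`,
and the right-hand side of the estimate is finite.
-/

open MeasureTheory ENNReal
open scoped NNReal

theorem Real.one_add_rpow_le_of_le_mul_add {a b d c s : ℝ} (ha : 0 ≤ a) (hb : 0 ≤ b)
    (hd0 : 0 ≤ d) (hc : 1 ≤ 2 * c) (hs : 0 ≤ s) (hd : d ≤ c * (a + b)) :
    (1 + d) ^ s ≤ (2 * c) ^ s * ((1 + a) ^ s + (1 + b) ^ s) := by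
  have hmax : 1 + d ≤ 2 * c * max (1 + a) (1 + b) := by
    nlinarith [le_max_left (1 + a) (1 + b), le_max_right (1 + a) (1 + b)]
  calc (1 + d) ^ s
      ≤ (2 * c * max (1 + a) (1 + b)) ^ s := by gcongr
    _ = (2 * c) ^ s * max (1 + a) (1 + b) ^ s := Real.mul_rpow (by linarith) (by positivity)
    _ ≤ (2 * c) ^ s * ((1 + a) ^ s + (1 + b) ^ s) := by
        gcongr
        rcases max_cases (1 + a) (1 + b) with ⟨h, -⟩ | ⟨h, -⟩ <;> rw [h]
        · exact le_add_of_nonneg_right (by positivity)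
        · exact le_add_of_nonneg_left (by positivity)

theorem ofReal_one_add_rpow_le_mul_add {G : Type*} [Group G] {qn : G → ℝ}
    (hqn : ∀ x, 0 ≤ qn x) {c : ℝ} (hc : 1 ≤ 2 * c)
    (htri : ∀ x y, qn (x * y) ≤ c * (qn x + qn y)) {s : ℝ} (hs : 0 ≤ s) (x y : G) :
    ENNReal.ofReal ((1 + qn x) ^ s) ≤ ENNReal.ofReal ((2 * c) ^ s) *
      (ENNReal.ofReal ((1 + qn y) ^ s) + ENNReal.ofReal ((1 + qn (y⁻¹ * x)) ^ s)) := by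
  have hyx := htri y (y⁻¹ * x)
  rw [mul_inv_cancel_left] at hyx
  rw [← ENNReal.ofReal_add (by have := hqn y; positivity) (by have := hqn (y⁻¹ * x); positivity),
    ← ENNReal.ofReal_mul (by positivity)]
  exact ENNReal.ofReal_le_ofReal
    (Real.one_add_rpow_le_of_le_mul_add (hqn y) (hqn _) (hqn x) hc hs hyx)

namespace MeasureTheory

-- Halmos' identity `μ s * ∫⁻ f = ∫⁻ x, μ (s x⁻¹) * f x⁻¹`, where right invariance makes
-- `μ (s x⁻¹) = μ s` constant.
theorem Measure.isInvInvariant_of_isMulLeftInvariant_of_isMulRightInvariant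
    {G : Type*} [Group G] [MeasurableSpace G] [MeasurableMul₂ G] [MeasurableInv G]
    (μ : Measure G) [SigmaFinite μ] [μ.IsMulLeftInvariant] [μ.IsMulRightInvariant] :
    μ.IsInvInvariant := by
  constructor
  rcases eq_or_ne μ 0 with rfl | hμ
  · simp [Measure.inv]
  obtain ⟨s, hs, -, hs_pos, hs_fin⟩ :=
    exists_subset_measure_lt_top MeasurableSet.univ (Measure.measure_univ_pos.mpr hμ)
  ext A hA
  have key := measure_mul_lintegral_eq μ μ hs (A.indicator 1) (measurable_one.indicator hA)
  simp_rw [measure_preimage_mul_right, lintegral_const_mul' _ _ hs_fin.ne,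
    ← lintegral_map (measurable_one.indicator hA) measurable_inv,
    lintegral_indicator_one hA] at key
  exact ((ENNReal.mul_right_inj hs_pos.ne' hs_fin.ne).mp key).symm

-- Hölder's inequality for the measure `u • μ`.
theorem lintegral_mul_rpow_le {α : Type*} [MeasurableSpace α] {μ : Measure α}
    {u w : α → ℝ≥0∞} (hu : AEMeasurable u μ) (hw : AEMeasurable w μ) {p : ℝ} (hp : 1 ≤ p) :
    (∫⁻ a, u a * w a ∂μ) ^ p ≤ (∫⁻ a, u a ∂μ) ^ (p - 1) * ∫⁻ a, u a * w a ^ p ∂μ := by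
  have hp0 : 0 < p := by linarith
  have hp_inv : p⁻¹ ≤ 1 := inv_le_one_of_one_le₀ hp
  have hsplit (a : α) : u a ^ (1 - p⁻¹) * (u a * w a ^ p) ^ p⁻¹ = u a * w a := by
    rw [ENNReal.mul_rpow_of_nonneg _ _ (by positivity), ← ENNReal.rpow_mul,
      mul_inv_cancel₀ hp0.ne', ENNReal.rpow_one, ← mul_assoc,
      ← ENNReal.rpow_add_of_nonneg _ _ (by linarith) (by positivity), sub_add_cancel,
      ENNReal.rpow_one]
  have holder := lintegral_mul_norm_pow_le (g := fun a => u a * w a ^ p) hu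
    (hu.mul (hw.pow_const p)) (by linarith) (inv_nonneg.mpr hp0.le) (sub_add_cancel 1 p⁻¹)
  simp only [hsplit] at holder
  calc (∫⁻ a, u a * w a ∂μ) ^ p
      ≤ ((∫⁻ a, u a ∂μ) ^ (1 - p⁻¹) * (∫⁻ a, u a * w a ^ p ∂μ) ^ p⁻¹) ^ p :=
        ENNReal.rpow_le_rpow holder hp0.le
    _ = (∫⁻ a, u a ∂μ) ^ (p - 1) * ∫⁻ a, u a * w a ^ p ∂μ := by
        rw [ENNReal.mul_rpow_of_nonneg _ _ hp0.le, ← ENNReal.rpow_mul, ← ENNReal.rpow_mul,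
          inv_mul_cancel₀ hp0.ne', ENNReal.rpow_one, sub_mul, one_mul, inv_mul_cancel₀ hp0.ne']

theorem memLp_one_of_memLp_two_smul {α E : Type*} [MeasurableSpace α] {μ : Measure α}
    [NormedAddCommGroup E] [NormedSpace ℝ E] {w : α → ℝ} (hw : ∀ x, w x ≠ 0)
    (hw_inv : MemLp (fun x => (w x)⁻¹) 2 μ) {f : α → E} (hf : MemLp (fun x => w x • f x) 2 μ) :
    MemLp f 1 μ := by
  convert (hf.smul hw_inv : MemLp _ 1 μ) using 1
  ext x
  simp [smul_smul, inv_mul_cancel₀ (hw x)]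

theorem memLp_two_inv_rpow_of_integrable {α : Type*} [MeasurableSpace α] {μ : Measure α}
    {φ : α → ℝ} (hφ : Measurable φ) (hφ0 : ∀ x, 0 ≤ φ x) {s : ℝ}
    (h : Integrable (fun x => φ x ^ (-(2 * s))) μ) : MemLp (fun x => (φ x ^ s)⁻¹) 2 μ := by
  refine (memLp_two_iff_integrable_sq (hφ.pow_const s).inv.aestronglyMeasurable).mpr
    (h.congr (ae_of_all _ fun x => ?_))
  simp only [Pi.inv_apply]
  rw [← Real.rpow_neg (hφ0 x), ← Real.rpow_natCast, ← Real.rpow_mul (hφ0 x)]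
  push_cast
  ring_nf

section Group

variable {G : Type*} [Group G] [MeasurableSpace G] [MeasurableMul₂ G]
  {μ : Measure G} [μ.IsMulLeftInvariant] {u v : G → ℝ≥0∞}

theorem mlconvolution_comp_inv :
    (fun x => v x⁻¹) ⋆ₘₗ[μ] (fun x => u x⁻¹) = fun x => (u ⋆ₘₗ[μ] v) x⁻¹ := by
  ext x
  unfold mlconvolution
  conv_rhs => rw [← lintegral_mul_left_eq_self _ x⁻¹]
  simp [mul_comm]

variable [MeasurableInv G] [SFinite μ]

theorem lintegral_mlconvolution (hu : Measurable u) (hv : Measurable v) :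
    ∫⁻ x, (u ⋆ₘₗ[μ] v) x ∂μ = (∫⁻ x, u x ∂μ) * ∫⁻ x, v x ∂μ := by
  unfold mlconvolution
  calc ∫⁻ x, ∫⁻ y, u y * v (y⁻¹ * x) ∂μ ∂μ
      = ∫⁻ y, u y * ∫⁻ x, v (y⁻¹ * x) ∂μ ∂μ := by
        rw [lintegral_lintegral_swap (by fun_prop)]
        exact lintegral_congr fun y => lintegral_const_mul _ (by fun_prop)
    _ = (∫⁻ x, u x ∂μ) * ∫⁻ x, v x ∂μ := by
        simp_rw [lintegral_mul_left_eq_self]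
        exact lintegral_mul_const _ hu

theorem eLpNorm_mlconvolution_le_eLpNorm_one_mul (hu : Measurable u) (hv : Measurable v)
    {p : ℝ≥0∞} (hp1 : 1 ≤ p) (hp : p ≠ ∞) :
    eLpNorm (u ⋆ₘₗ[μ] v) p μ ≤ eLpNorm u 1 μ * eLpNorm v p μ := by
  have hp0 : p ≠ 0 := (zero_lt_one.trans_le hp1).ne'
  have hq : 1 ≤ p.toReal := by simpa using ENNReal.toReal_mono hp hp1
  set q := p.toReal
  simp only [eLpNorm_eq_lintegral_rpow_enorm_toReal hp0 hp, eLpNorm_one_eq_lintegral_enorm,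
    enorm_eq_self]
  set U := ∫⁻ x, u x ∂μ
  have hpow : ∫⁻ x, (u ⋆ₘₗ[μ] v) x ^ q ∂μ ≤ U ^ q * ∫⁻ x, v x ^ q ∂μ :=
    calc ∫⁻ x, (u ⋆ₘₗ[μ] v) x ^ q ∂μ
        ≤ ∫⁻ x, U ^ (q - 1) * (u ⋆ₘₗ[μ] fun z => v z ^ q) x ∂μ :=
          lintegral_mono fun x => lintegral_mul_rpow_le hu.aemeasurable (by fun_prop) hq
      _ = U ^ (q - 1) * (U * ∫⁻ x, v x ^ q ∂μ) := by
          rw [lintegral_const_mul _ (measurable_mlconvolution _ hu (by fun_prop)),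
            lintegral_mlconvolution hu (by fun_prop)]
      _ = U ^ q * ∫⁻ x, v x ^ q ∂μ := by
          rw [← mul_assoc]
          congr 1
          conv_rhs => rw [← sub_add_cancel q 1]
          rw [ENNReal.rpow_add_of_nonneg _ _ (sub_nonneg.mpr hq) zero_le_one, ENNReal.rpow_one]
  calc (∫⁻ x, (u ⋆ₘₗ[μ] v) x ^ q ∂μ) ^ (1 / q)
      ≤ (U ^ q * ∫⁻ x, v x ^ q ∂μ) ^ (1 / q) := ENNReal.rpow_le_rpow hpow (by positivity)
    _ = U * (∫⁻ x, v x ^ q ∂μ) ^ (1 / q) := by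
        rw [ENNReal.mul_rpow_of_nonneg _ _ (by positivity), ← ENNReal.rpow_mul,
          mul_one_div_cancel (by positivity), ENNReal.rpow_one]

theorem eLpNorm_mlconvolution_le_mul_eLpNorm_one [μ.IsInvInvariant] (hu : Measurable u)
    (hv : Measurable v) {p : ℝ≥0∞} (hp1 : 1 ≤ p) (hp : p ≠ ∞) :
    eLpNorm (u ⋆ₘₗ[μ] v) p μ ≤ eLpNorm u p μ * eLpNorm v 1 μ := by
  have hinv {w : G → ℝ≥0∞} (hw : Measurable w) (r : ℝ≥0∞) :
      eLpNorm (fun x => w x⁻¹) r μ = eLpNorm w r μ :=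
    eLpNorm_comp_measurePreserving hw.aestronglyMeasurable (Measure.measurePreserving_inv μ)
  rw [← hinv (measurable_mlconvolution μ hu hv), ← mlconvolution_comp_inv, mul_comm,
    ← hinv hu, ← hinv hv]
  exact eLpNorm_mlconvolution_le_eLpNorm_one_mul (by fun_prop) (by fun_prop) hp1 hp

theorem eLpNorm_mul_mlconvolution_le [μ.IsInvInvariant] {W : G → ℝ≥0∞} (hW : Measurable W)
    {K : ℝ≥0} (hK : ∀ x y, W x ≤ K * (W y + W (y⁻¹ * x))) (hu : Measurable u)
    (hv : Measurable v) {p : ℝ≥0∞} (hp1 : 1 ≤ p) (hp : p ≠ ∞) :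
    eLpNorm (fun x => W x * (u ⋆ₘₗ[μ] v) x) p μ ≤
      K * (eLpNorm (fun x => W x * u x) p μ * eLpNorm v 1 μ +
        eLpNorm u 1 μ * eLpNorm (fun x => W x * v x) p μ) := by
  have hpoint : ∀ x, W x * (u ⋆ₘₗ[μ] v) x ≤
      K * (((fun y => W y * u y) ⋆ₘₗ[μ] v) x + (u ⋆ₘₗ[μ] fun y => W y * v y) x) := fun x =>
    calc W x * (u ⋆ₘₗ[μ] v) x
        ≤ ∫⁻ y, W x * (u y * v (y⁻¹ * x)) ∂μ := lintegral_const_mul_le _ _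
      _ ≤ ∫⁻ y, K * (W y * u y * v (y⁻¹ * x) + u y * (W (y⁻¹ * x) * v (y⁻¹ * x))) ∂μ :=
          lintegral_mono fun y => by
            calc W x * (u y * v (y⁻¹ * x))
                ≤ K * (W y + W (y⁻¹ * x)) * (u y * v (y⁻¹ * x)) := by gcongr; exact hK x y
              _ = _ := by ring
      _ = _ := by
          rw [lintegral_const_mul _ (by fun_prop), lintegral_add_left (by fun_prop)]
          rfl
  calc eLpNorm (fun x => W x * (u ⋆ₘₗ[μ] v) x) p μ
      ≤ K • eLpNorm (((fun y => W y * u y) ⋆ₘₗ[μ] v) + (u ⋆ₘₗ[μ] fun y => W y * v y)) p μ :=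
        eLpNorm_le_nnreal_smul_eLpNorm_of_ae_le_mul' (ae_of_all _ hpoint) p
    _ ≤ K * (eLpNorm ((fun y => W y * u y) ⋆ₘₗ[μ] v) p μ +
          eLpNorm (u ⋆ₘₗ[μ] fun y => W y * v y) p μ) := by
        rw [ENNReal.smul_def, smul_eq_mul]
        gcongr
        exact eLpNorm_add_le (by fun_prop) (by fun_prop) hp1
    _ ≤ _ := by
        gcongr
        · exact eLpNorm_mlconvolution_le_mul_eLpNorm_one (by fun_prop) hv hp1 hp
        · exact eLpNorm_mlconvolution_le_eLpNorm_one_mul hu (by fun_prop) hp1 hp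

theorem eLpNorm_weight_mul_convolution_le [μ.IsInvInvariant] {qn : G → ℝ}
    (hqn_meas : Measurable qn) (hqn : ∀ x, 0 ≤ qn x) {c : ℝ} (hc : 1 ≤ 2 * c)
    (htri : ∀ x y, qn (x * y) ≤ c * (qn x + qn y)) {s : ℝ} (hs : 0 ≤ s) {f g : G → ℂ}
    (hf : Measurable f) (hg : Measurable g) {p : ℝ≥0∞} (hp1 : 1 ≤ p) (hp : p ≠ ∞) :
    eLpNorm (fun x => ((1 + qn x) ^ s : ℝ) * ∫ y, g y * f (y⁻¹ * x) ∂μ) p μ ≤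
      ENNReal.ofReal ((2 * c) ^ s) *
        (eLpNorm (fun x => ((1 + qn x) ^ s : ℝ) * f x) p μ * eLpNorm g 1 μ +
          eLpNorm f 1 μ * eLpNorm (fun x => ((1 + qn x) ^ s : ℝ) * g x) p μ) := by
  set W : G → ℝ≥0∞ := fun x => ENNReal.ofReal ((1 + qn x) ^ s)
  have henorm (x : G) (z : ℂ) : ‖(((1 + qn x) ^ s : ℝ) : ℂ) * z‖ₑ = W x * ‖z‖ₑ := by
    rw [enorm_mul, ← ofReal_norm (((1 + qn x) ^ s : ℝ) : ℂ), Complex.norm_real,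
      Real.norm_of_nonneg (by have := hqn x; positivity)]
  have hweighted (h : G → ℂ) : eLpNorm (fun x => ((1 + qn x) ^ s : ℝ) * h x) p μ =
      eLpNorm (fun x => W x * ‖h x‖ₑ) p μ := by
    rw [← eLpNorm_enorm]
    simp_rw [henorm]
  have hpoint (x : G) : ‖(((1 + qn x) ^ s : ℝ) : ℂ) * ∫ y, g y * f (y⁻¹ * x) ∂μ‖ₑ ≤
      ‖W x * ((fun y => ‖g y‖ₑ) ⋆ₘₗ[μ] fun y => ‖f y‖ₑ) x‖ₑ := by
    rw [henorm, enorm_eq_self, mlconvolution_def]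
    gcongr
    simpa only [enorm_mul] using enorm_integral_le_lintegral_enorm fun y => g y * f (y⁻¹ * x)
  calc _ ≤ eLpNorm (fun x => W x * ((fun y => ‖g y‖ₑ) ⋆ₘₗ[μ] fun y => ‖f y‖ₑ) x) p μ :=
        eLpNorm_mono_enorm hpoint
    _ ≤ _ := eLpNorm_mul_mlconvolution_le (K := (2 * c) ^ s |>.toNNReal) (by fun_prop)
          (ofReal_one_add_rpow_le_mul_add hqn hc htri hs) hg.enorm hf.enorm hp1 hp
    _ = _ := by
        simp only [hweighted, eLpNorm_enorm]
        rw [add_comm, mul_comm (eLpNorm _ p μ), mul_comm (eLpNorm _ 1 μ)]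
        rfl

end Group

end MeasureTheory

/-- The algebra property of `H^s(Ĝ)`, phrased on the spatial side:
with `f = ℱ_G⁻¹σ`, `g = ℱ_G⁻¹τ` one has `ℱ_G⁻¹(στ) = g * f` (group convolution), so
`‖στ‖_{H^s} = ‖ω_s (g∗f)‖_{L²} ≤ C(‖ω_s f‖_{L²} ‖g‖_{L¹} + ‖f‖_{L¹} ‖ω_s g‖_{L²})`
with `ω_s = (1+|·|)^s`. Consequently, for `s > Q/2` (so that the Sobolev embedding
`‖f‖_{L¹} ≲ ‖ω_s f‖_{L²}` holds), `H^s(Ĝ)` is a (non-commutative) algebra: the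
convolution of two weighted-`L²` kernels is again in weighted `L²`. -/
theorem sobolev_dual_algebra {G : Type*} [Group G] [MeasurableSpace G]
    [MeasurableMul₂ G] [MeasurableInv G]
    (μ : Measure G) [SigmaFinite μ] [μ.IsMulLeftInvariant] [μ.IsMulRightInvariant]
    (qn : G → ℝ) (hqn_meas : Measurable qn) (hqn_nonneg : ∀ x, 0 ≤ qn x)
    (c : ℝ) (hc : 1 ≤ c) (htri : ∀ x y, qn (x * y) ≤ c * (qn x + qn y))
    (s : ℝ) (hs : 0 ≤ s) :
    ∃ C > 0, ∀ f g : G → ℂ, Measurable f → Measurable g →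
      (eLpNorm (fun x => ((1 + qn x) ^ s : ℝ) * ∫ y, g y * f (y⁻¹ * x) ∂μ) 2 μ
        ≤ ENNReal.ofReal C *
          (eLpNorm (fun x => ((1 + qn x) ^ s : ℝ) * f x) 2 μ * eLpNorm g 1 μ +
            eLpNorm f 1 μ * eLpNorm (fun x => ((1 + qn x) ^ s : ℝ) * g x) 2 μ)) ∧
      (∀ Q : ℝ, Q / 2 < s →
        (∀ t : ℝ, Q / 2 < t → Integrable (fun x => (1 + qn x) ^ (-(2 * t))) μ) →
        MemLp (fun x => ((1 + qn x) ^ s : ℝ) * f x) 2 μ →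
        MemLp (fun x => ((1 + qn x) ^ s : ℝ) * g x) 2 μ →
        MemLp (fun x => ((1 + qn x) ^ s : ℝ) * ∫ y, g y * f (y⁻¹ * x) ∂μ) 2 μ) := by
  have := Measure.isInvInvariant_of_isMulLeftInvariant_of_isMulRightInvariant μ
  have hω : ∀ x, 0 < 1 + qn x := fun x => by linarith [hqn_nonneg x]
  refine ⟨(2 * c) ^ s, by positivity, fun f g hf hg => ?_⟩
  have hbound := eLpNorm_weight_mul_convolution_le (μ := μ) hqn_meas hqn_nonneg
    (by linarith) htri hs hf hg one_le_two ofNat_ne_top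
  refine ⟨hbound, fun Q hQs hint hf2 hg2 => ⟨?_, hbound.trans_lt ?_⟩⟩
  · have hconv : StronglyMeasurable fun x => ∫ y, g y * f (y⁻¹ * x) ∂μ :=
      (by fun_prop : Measurable fun p : G × G => g p.2 * f (p.2⁻¹ * p.1)).stronglyMeasurable
        |>.integral_prod_right'
    exact ((by fun_prop : Measurable fun x => (((1 + qn x) ^ s : ℝ) : ℂ)).stronglyMeasurable.mul
      hconv).aestronglyMeasurable
  have hω_inv := memLp_two_inv_rpow_of_integrable (by fun_prop) (fun x => (hω x).le) (hint s hQs)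
  have hL1 {h : G → ℂ} (hh : MemLp (fun x => ((1 + qn x) ^ s : ℝ) * h x) 2 μ) : MemLp h 1 μ :=
    memLp_one_of_memLp_two_smul (fun x => (Real.rpow_pos_of_pos (hω x) s).ne') hω_inv
      (by simpa only [Complex.real_smul] using hh)
  exact mul_lt_top ofReal_lt_top (add_lt_top.mpr
    ⟨mul_lt_top hf2.eLpNorm_lt_top (hL1 hg2).eLpNorm_lt_top,
      mul_lt_top (hL1 hf2).eLpNorm_lt_top hg2.eLpNorm_lt_top⟩)
end

section
/- Dyadic kernel summation estimate: let Q > 0, s > Q/2, ε = (s + Q/2)/2, and let (κ_j)_{j∈ℤ} be measurable functions on a graded Lie group G of homogeneous dimension Q with sup_j ‖(1+|·|)^s κ_j‖_{L²(G)} =: M < ∞. Then for every m ∈ ℤ, Σ_{j∈ℤ} ∫_{2^m ≤ |x| ≤ 2^{m+1}} |2^{−Qj} κ_j(2^{−j}·x)| dx ≤ C·M with C independent of m and (κ_j). In particular, the sum Σ_j 2^{−Qj}κ_j(2^{−j}·) converges absolutely in L¹_loc(G∖{0}). -/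
/-!
Rescaling by `D (2⁻ʲ)` turns the `j`-th term into `∫_{A (m-j)} |κ_j|`, where `A k` is the dyadic
annulus `2ᵏ ≤ |x| ≤ 2ᵏ⁺¹`. Cauchy–Schwarz against the weight `(1 + |x|)ˢ` bounds this by
`M ‖1_{A k} (1 + |·|)⁻ˢ‖_{L²}`, and these norms are summable over `k ∈ ℤ` because they decay
geometrically in both directions: like `2^{-(s-t)k}` on large annuli, by comparison with
`(1 + |·|)⁻ᵗ ∈ L²` for some `Q/2 < t < s`, and like `2^{Qk/2}` on small ones, since
`μ (A k) = 2^{Qk} μ (A 0)`.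
-/

open MeasureTheory ENNReal

theorem tsum_nat_ne_top_of_le_two_rpow {f : ℕ → ℝ≥0∞} {a : ℝ≥0∞} {α : ℝ} (ha : a ≠ ⊤)
    (hα : 0 < α) (hf : ∀ n : ℕ, f n ≤ ENNReal.ofReal (2 ^ (-α * n)) * a) : ∑' n, f n ≠ ⊤ := by
  have hq : ENNReal.ofReal (2 ^ (-α)) < 1 :=
    ofReal_lt_one.2 (Real.rpow_lt_one_of_one_lt_of_neg one_lt_two (neg_lt_zero.2 hα))
  refine ne_top_of_le_ne_top ?_ (ENNReal.tsum_le_tsum hf)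
  simp_rw [Real.rpow_mul_natCast zero_le_two, ENNReal.ofReal_pow (by positivity : (0:ℝ) ≤ 2 ^ (-α))]
  rw [ENNReal.tsum_mul_right, ENNReal.tsum_geometric]
  exact mul_ne_top (inv_ne_top.2 (tsub_pos_of_lt hq).ne') ha

theorem tsum_int_ne_top_of_le_two_rpow {f : ℤ → ℝ≥0∞} {a b : ℝ≥0∞} {α β : ℝ} (ha : a ≠ ⊤)
    (hb : b ≠ ⊤) (hα : 0 < α) (hβ : 0 < β)
    (hfa : ∀ k : ℤ, f k ≤ ENNReal.ofReal (2 ^ (-α * k)) * a)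
    (hfb : ∀ k : ℤ, f k ≤ ENNReal.ofReal (2 ^ (β * k)) * b) : ∑' k, f k ≠ ⊤ := by
  rw [tsum_of_nat_of_neg_add_one ENNReal.summable ENNReal.summable]
  refine add_ne_top.2 ⟨tsum_nat_ne_top_of_le_two_rpow ha hα fun n => by simpa using hfa n,
    tsum_nat_ne_top_of_le_two_rpow hb hβ fun n => (hfb _).trans ?_⟩
  exact mul_le_mul_left
    (ofReal_le_ofReal (Real.rpow_le_rpow_of_exponent_le one_le_two (by push_cast; nlinarith))) _

theorem exists_pos_mul_ofReal_le_ofReal_mul {S : ℝ≥0∞} (hS : S ≠ ⊤) :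
    ∃ C > 0, ∀ M : ℝ, 0 ≤ M → S * ENNReal.ofReal M ≤ ENNReal.ofReal (C * M) := by
  refine ⟨S.toReal + 1, by positivity, fun M hM => ?_⟩
  rw [ENNReal.ofReal_mul (by positivity)]
  gcongr
  exact (ofReal_toReal hS).symm.le.trans (ofReal_le_ofReal (by linarith))

section

variable {G : Type*} [MeasurableSpace G] {μ : Measure G}

theorem setLIntegral_preimage_comp_of_lintegral_comp {D : G → G} {c : ℝ≥0∞}
    (hD : ∀ f : G → ℝ≥0∞, Measurable f → ∫⁻ x, f (D x) ∂μ = c * ∫⁻ x, f x ∂μ)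
    {f : G → ℝ≥0∞} (hf : Measurable f) {s : Set G} (hs : MeasurableSet s)
    (hs' : MeasurableSet (D ⁻¹' s)) :
    ∫⁻ x in D ⁻¹' s, f (D x) ∂μ = c * ∫⁻ x in s, f x ∂μ := by
  rw [← lintegral_indicator hs', ← lintegral_indicator hs, ← hD _ (hf.indicator hs)]
  exact lintegral_congr fun x => Set.indicator_comp_right D

theorem setLIntegral_enorm_le_eLpNorm_inv_mul_eLpNorm {𝕜 : Type*} [RCLike 𝕜] {w : G → ℝ}
    (hw : Measurable w) {g : G → 𝕜} (hg : Measurable g) {t : Set G} (ht : MeasurableSet t)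
    (hw0 : ∀ x ∈ t, w x ≠ 0) :
    ∫⁻ x in t, ‖g x‖ₑ ∂μ ≤
      eLpNorm (t.indicator fun x => (w x)⁻¹) 2 μ * eLpNorm (fun x => (w x : 𝕜) * g x) 2 μ := by
  have hsplit : t.indicator g =
      fun x => ((t.indicator (fun x => (w x)⁻¹) x : ℝ) : 𝕜) * ((w x : 𝕜) * g x) := by
    ext x
    by_cases hx : x ∈ t
    · simp [Set.indicator_of_mem hx, hw0 x hx]
    · simp [Set.indicator_of_notMem hx]
  calc ∫⁻ x in t, ‖g x‖ₑ ∂μ = eLpNorm (t.indicator g) 1 μ := by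
        rw [eLpNorm_one_eq_lintegral_enorm, ← lintegral_indicator ht]
        simp only [enorm_indicator_eq_indicator_enorm]
    _ ≤ _ := by
      have := eLpNorm_le_eLpNorm_mul_eLpNorm_of_nnnorm (μ := μ) (p := 2) (q := 2) (r := 1)
        (f := t.indicator fun x => (w x)⁻¹) (g := fun x => (w x : 𝕜) * g x)
        (hw.inv.indicator ht).aestronglyMeasurable
        ((RCLike.measurable_ofReal.comp hw).mul hg).aestronglyMeasurable
        (fun (a : ℝ) (z : 𝕜) => (a : 𝕜) * z) 1 (.of_forall fun x => by simp)
      rwa [ENNReal.coe_one, one_mul, ← hsplit] at this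

end

def dyadicAnnulus {G : Type*} (qn : G → ℝ) (k : ℤ) : Set G :=
  {x | (2 : ℝ) ^ (k : ℝ) ≤ qn x ∧ qn x ≤ (2 : ℝ) ^ ((k : ℝ) + 1)}

theorem preimage_dyadicAnnulus_sub {G : Type*} {qn : G → ℝ} {D : G → G} {l : ℤ}
    (hD : ∀ x, qn (D x) = 2 ^ (-(l : ℝ)) * qn x) (k : ℤ) :
    D ⁻¹' dyadicAnnulus qn (k - l) = dyadicAnnulus qn k := by
  have hpow : ∀ a : ℝ, (2 : ℝ) ^ (a - l) = 2 ^ (-(l : ℝ)) * 2 ^ a := fun a => by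
    rw [← Real.rpow_add two_pos, neg_add_eq_sub]
  have hr : (0 : ℝ) < 2 ^ (-(l : ℝ)) := by positivity
  ext x
  simp only [dyadicAnnulus, Set.mem_preimage, Set.mem_ofPred_eq, hD, Int.cast_sub,
    sub_add_eq_add_sub, hpow, mul_le_mul_iff_right₀ hr]

section

variable {G : Type*} [MeasurableSpace G] {μ : Measure G} {qn : G → ℝ} {Q : ℝ} {D : ℝ → G → G}

theorem measurableSet_dyadicAnnulus (hqn : Measurable qn) (k : ℤ) :
    MeasurableSet (dyadicAnnulus qn k) :=
  (measurableSet_le measurable_const hqn).inter (measurableSet_le hqn measurable_const)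

theorem eLpNorm_indicator_dyadicAnnulus_le {s t : ℝ} (hts : t ≤ s) (k : ℤ) :
    eLpNorm ((dyadicAnnulus qn k).indicator fun x => ((1 + qn x) ^ s)⁻¹) 2 μ ≤
      ENNReal.ofReal (2 ^ (-(s - t) * k)) * eLpNorm (fun x => (1 + qn x) ^ (-t)) 2 μ := by
  rw [← Real.enorm_of_nonneg (by positivity), ← eLpNorm_const_smul]
  refine eLpNorm_mono fun x => ?_
  by_cases hx : x ∈ dyadicAnnulus qn k
  · have hk : (2 : ℝ) ^ (k : ℝ) ≤ 1 + qn x := hx.1.trans (le_add_of_nonneg_left zero_le_one)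
    have hpos : 0 < 1 + qn x := (by positivity : (0 : ℝ) < 2 ^ (k : ℝ)).trans_le hk
    rw [Set.indicator_of_mem hx, Pi.smul_apply, smul_eq_mul, Real.norm_of_nonneg (by positivity),
      Real.norm_of_nonneg (by positivity)]
    calc ((1 + qn x) ^ s)⁻¹ = (1 + qn x) ^ (-(s - t)) * (1 + qn x) ^ (-t) := by
          rw [← Real.rpow_neg hpos.le, ← Real.rpow_add hpos]; ring_nf
      _ ≤ (2 ^ (k : ℝ)) ^ (-(s - t)) * (1 + qn x) ^ (-t) := by
          have := Real.rpow_le_rpow_of_nonpos (by positivity) hk (by linarith : -(s - t) ≤ 0)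
          gcongr
      _ = 2 ^ (-(s - t) * k) * (1 + qn x) ^ (-t) := by
          rw [← Real.rpow_mul zero_le_two, mul_comm (k : ℝ)]
  · rw [Set.indicator_of_notMem hx, norm_zero]
    positivity

theorem eLpNorm_indicator_dyadicAnnulus_le_measure {s : ℝ} (hs : 0 ≤ s) (k : ℤ) :
    eLpNorm ((dyadicAnnulus qn k).indicator fun x => ((1 + qn x) ^ s)⁻¹) 2 μ ≤
      μ (dyadicAnnulus qn k) ^ (1 / 2 : ℝ) := by
  calc _ ≤ eLpNorm ((dyadicAnnulus qn k).indicator fun _ => (1 : ℝ)) 2 μ := by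
        refine eLpNorm_mono fun x => ?_
        by_cases hx : x ∈ dyadicAnnulus qn k
        · have h1 : 1 ≤ 1 + qn x :=
            le_add_of_nonneg_right ((by positivity : (0 : ℝ) ≤ 2 ^ (k : ℝ)).trans hx.1)
          rw [Set.indicator_of_mem hx, Set.indicator_of_mem hx, norm_one, norm_inv,
            Real.norm_of_nonneg (by positivity)]
          exact inv_le_one_of_one_le₀ (Real.one_le_rpow h1 hs)
        · simp [Set.indicator_of_notMem hx]
    _ ≤ _ := by simpa using eLpNorm_indicator_const_le (μ := μ) (1 : ℝ) 2

theorem measure_dyadicAnnulus_ne_top_of_integrable {s : ℝ} (hs : 0 ≤ s)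
    (h : Integrable (fun x => (1 + qn x) ^ (-s)) μ) : μ (dyadicAnnulus qn 0) ≠ ⊤ := by
  refine ne_top_of_le_ne_top (h.measure_norm_ge_lt_top (ε := 3 ^ (-s)) (by positivity)).ne
    (measure_mono fun x hx => ?_)
  have hx : 1 ≤ qn x ∧ qn x ≤ 2 := by simpa [dyadicAnnulus] using hx
  rw [Set.mem_ofPred_eq, Real.norm_of_nonneg (Real.rpow_nonneg (by linarith) _)]
  exact Real.rpow_le_rpow_of_nonpos (by linarith) (by linarith) (neg_nonpos.2 hs)

theorem measure_dyadicAnnulus (hqn : Measurable qn)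
    (hDscale : ∀ r : ℝ, 0 < r → ∀ f : G → ℝ≥0∞, Measurable f →
      ∫⁻ x, f (D r x) ∂μ = ENNReal.ofReal (r ^ (-Q)) * ∫⁻ x, f x ∂μ)
    (hhom : ∀ r : ℝ, 0 < r → ∀ x, qn (D r x) = r * qn x) (k : ℤ) :
    μ (dyadicAnnulus qn k) = ENNReal.ofReal (2 ^ (Q * k)) * μ (dyadicAnnulus qn 0) := by
  have hr : (0 : ℝ) < 2 ^ (-(k : ℝ)) := by positivity
  have hpre := preimage_dyadicAnnulus_sub (hhom _ hr) k
  rw [sub_self] at hpre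
  have := setLIntegral_preimage_comp_of_lintegral_comp (hDscale _ hr) measurable_one
    (measurableSet_dyadicAnnulus hqn 0) (hpre ▸ measurableSet_dyadicAnnulus hqn k)
  simp only [Pi.one_apply, setLIntegral_one, hpre] at this
  rw [this, ← Real.rpow_mul zero_le_two, neg_mul_neg, mul_comm (k : ℝ)]

theorem setLIntegral_dyadicAnnulus_dilate {𝕜 : Type*} [RCLike 𝕜] (hqn : Measurable qn)
    (hDscale : ∀ r : ℝ, 0 < r → ∀ f : G → ℝ≥0∞, Measurable f →
      ∫⁻ x, f (D r x) ∂μ = ENNReal.ofReal (r ^ (-Q)) * ∫⁻ x, f x ∂μ)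
    (hhom : ∀ r : ℝ, 0 < r → ∀ x, qn (D r x) = r * qn x) {κ : G → 𝕜} (hκ : Measurable κ)
    (m j : ℤ) :
    ∫⁻ x in dyadicAnnulus qn m, ‖(((2 : ℝ) ^ (-Q * j) : ℝ) : 𝕜) * κ (D (2 ^ (-(j : ℝ))) x)‖ₑ ∂μ =
      ∫⁻ y in dyadicAnnulus qn (m - j), ‖κ y‖ₑ ∂μ := by
  have hr : (0 : ℝ) < 2 ^ (-(j : ℝ)) := by positivity
  have hpre := preimage_dyadicAnnulus_sub (hhom _ hr) m
  have hA := measurableSet_dyadicAnnulus hqn (m - j)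
  calc _ = ENNReal.ofReal (2 ^ (-Q * j)) * ∫⁻ x in D (2 ^ (-(j : ℝ))) ⁻¹' dyadicAnnulus qn (m - j),
        ‖κ (D (2 ^ (-(j : ℝ))) x)‖ₑ ∂μ := by
        have hc : ‖(((2 : ℝ) ^ (-Q * j) : ℝ) : 𝕜)‖ₑ = ENNReal.ofReal (2 ^ (-Q * j)) := by
          rw [← ofReal_norm, RCLike.norm_ofReal, abs_of_pos (by positivity)]
        simp only [hpre, ← lintegral_const_mul' _ _ ofReal_ne_top, enorm_mul, hc]
    _ = _ := by
      rw [setLIntegral_preimage_comp_of_lintegral_comp (hDscale _ hr) hκ.enorm hA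
        (hpre ▸ measurableSet_dyadicAnnulus hqn m), ← mul_assoc, ← ofReal_mul (by positivity),
        ← Real.rpow_mul zero_le_two, ← Real.rpow_add two_pos,
        show -Q * j + -(j : ℝ) * -Q = 0 by ring, Real.rpow_zero, ofReal_one, one_mul]

theorem tsum_eLpNorm_indicator_dyadicAnnulus_ne_top {s : ℝ} (hQ : 0 < Q) (hs : Q / 2 < s)
    (hqn : Measurable qn) (hqn_nonneg : ∀ x, 0 ≤ qn x)
    (hDscale : ∀ r : ℝ, 0 < r → ∀ f : G → ℝ≥0∞, Measurable f →
      ∫⁻ x, f (D r x) ∂μ = ENNReal.ofReal (r ^ (-Q)) * ∫⁻ x, f x ∂μ)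
    (hhom : ∀ r : ℝ, 0 < r → ∀ x, qn (D r x) = r * qn x)
    (hpolar : ∀ t : ℝ, Q / 2 < t → Integrable (fun x => (1 + qn x) ^ (-(2 * t))) μ) :
    ∑' k : ℤ, eLpNorm ((dyadicAnnulus qn k).indicator fun x => ((1 + qn x) ^ s)⁻¹) 2 μ ≠ ⊤ := by
  obtain ⟨t, hQt, hts⟩ := exists_between hs
  have hweight : eLpNorm (fun x => (1 + qn x) ^ (-t)) 2 μ ≠ ⊤ := by
    have hmeas : Measurable fun x => (1 + qn x) ^ (-t) := by fun_prop
    refine ((memLp_two_iff_integrable_sq hmeas.aestronglyMeasurable).2 ?_).eLpNorm_ne_top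
    refine (hpolar t hQt).congr (.of_forall fun x => ?_)
    dsimp only
    rw [← Real.rpow_natCast, ← Real.rpow_mul (by linarith [hqn_nonneg x])]
    ring_nf
  have hA0 : μ (dyadicAnnulus qn 0) ≠ ⊤ :=
    measure_dyadicAnnulus_ne_top_of_integrable (by linarith) (hpolar s hs)
  refine tsum_int_ne_top_of_le_two_rpow hweight
    (rpow_ne_top_of_nonneg (by norm_num : (0 : ℝ) ≤ 1 / 2) hA0) (sub_pos.2 hts) (half_pos hQ)
    (eLpNorm_indicator_dyadicAnnulus_le hts.le) fun k => ?_
  calc _ ≤ μ (dyadicAnnulus qn k) ^ (1 / 2 : ℝ) :=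
        eLpNorm_indicator_dyadicAnnulus_le_measure (by linarith) k
    _ = ENNReal.ofReal (2 ^ (Q / 2 * k)) * μ (dyadicAnnulus qn 0) ^ (1 / 2 : ℝ) := by
      rw [measure_dyadicAnnulus hqn hDscale hhom k, mul_rpow_of_nonneg _ _ (by norm_num),
        ofReal_rpow_of_nonneg (by positivity) (by norm_num), ← Real.rpow_mul zero_le_two]
      ring_nf

end

theorem dyadic_kernel_summation_general {G : Type*} [MeasurableSpace G]
    (μ : Measure G) (Q : ℝ) (hQ : 0 < Q)
    (D : ℝ → G → G)
    (hDscale : ∀ r : ℝ, 0 < r → ∀ f : G → ℝ≥0∞, Measurable f →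
      ∫⁻ x, f (D r x) ∂μ = ENNReal.ofReal (r ^ (-Q)) * ∫⁻ x, f x ∂μ)
    (qn : G → ℝ) (hqn_meas : Measurable qn) (hqn_nonneg : ∀ x, 0 ≤ qn x)
    (hhom : ∀ r : ℝ, 0 < r → ∀ x, qn (D r x) = r * qn x)
    (hpolar : ∀ t : ℝ, Q / 2 < t → Integrable (fun x => (1 + qn x) ^ (-(2 * t))) μ)
    (s : ℝ) (hs : Q / 2 < s) :
    ∃ C > 0, ∀ κ : ℤ → G → ℂ, (∀ j, Measurable (κ j)) →
      ∀ M : ℝ, 0 ≤ M →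
      (∀ j : ℤ, eLpNorm (fun x => ((1 + qn x) ^ s : ℝ) * κ j x) 2 μ ≤ ENNReal.ofReal M) →
      ∀ m : ℤ,
        ∑' j : ℤ,
          ∫⁻ x in {x : G | (2 : ℝ) ^ (m : ℝ) ≤ qn x ∧ qn x ≤ (2 : ℝ) ^ ((m : ℝ) + 1)},
            (‖((2 : ℝ) ^ (-Q * (j : ℝ)) : ℝ) * κ j (D ((2 : ℝ) ^ (-(j : ℝ))) x)‖₊ : ℝ≥0∞) ∂μ
          ≤ ENNReal.ofReal (C * M) := by
  set b : ℤ → ℝ≥0∞ := fun k =>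
    eLpNorm ((dyadicAnnulus qn k).indicator fun x => ((1 + qn x) ^ s)⁻¹) 2 μ
  obtain ⟨C, hC, hbC⟩ := exists_pos_mul_ofReal_le_ofReal_mul
    (tsum_eLpNorm_indicator_dyadicAnnulus_ne_top hQ hs hqn_meas hqn_nonneg hDscale hhom hpolar)
  refine ⟨C, hC, fun κ hκ M hM hκM m => ?_⟩
  have hweight : Measurable fun x => (1 + qn x) ^ s := by fun_prop
  have hweight_ne_zero : ∀ x, (1 + qn x) ^ s ≠ 0 := fun x =>
    (Real.rpow_pos_of_pos (by linarith [hqn_nonneg x]) s).ne'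
  calc _ = ∑' j : ℤ, ∫⁻ y in dyadicAnnulus qn (m - j), ‖κ j y‖ₑ ∂μ :=
        tsum_congr fun j => setLIntegral_dyadicAnnulus_dilate hqn_meas hDscale hhom (hκ j) m j
    _ ≤ ∑' j : ℤ, b (m - j) * ENNReal.ofReal M := ENNReal.tsum_le_tsum fun j =>
        (setLIntegral_enorm_le_eLpNorm_inv_mul_eLpNorm hweight (hκ j)
          (measurableSet_dyadicAnnulus hqn_meas _) fun x _ => hweight_ne_zero x).trans
          (mul_le_mul_right (hκM j) _)
    _ = (∑' k : ℤ, b k) * ENNReal.ofReal M := by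
        rw [ENNReal.tsum_mul_right]
        exact congrArg (· * ENNReal.ofReal M) ((Equiv.subLeft m).tsum_eq b)
    _ ≤ ENNReal.ofReal (C * M) := hbC M hM

/-- Dyadic kernel summation estimate on a graded Lie group `G` of
homogeneous dimension `Q` with dilations `D_r` (Haar measure scaling `d(D_r x) = r^Q dx`)
and homogeneous quasi-norm `qn`: let `s > Q/2`, `ε = (s+Q/2)/2`, and let `(κ_j)_{j∈ℤ}`
be measurable with `sup_j ‖(1+|·|)^s κ_j‖_{L²} ≤ M`. Then for every `m ∈ ℤ`,
`∑_{j∈ℤ} ∫_{2^m ≤ |x| ≤ 2^{m+1}} |2^{−Qj} κ_j(D_{2^{−j}} x)| dx ≤ C·M`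
with `C` independent of `m` and of `(κ_j)`; in particular `∑_j 2^{−Qj}κ_j(2^{−j}·)`
converges absolutely in `L¹_loc(G∖{0})`. -/
theorem dyadic_kernel_summation {G : Type*} [MeasurableSpace G]
    (μ : Measure G) (Q : ℝ) (hQ : 0 < Q)
    (D : ℝ → G → G) (hDmeas : ∀ r, Measurable (D r))
    (hDscale : ∀ r : ℝ, 0 < r → ∀ f : G → ℝ≥0∞, Measurable f →
      ∫⁻ x, f (D r x) ∂μ = ENNReal.ofReal (r ^ (-Q)) * ∫⁻ x, f x ∂μ)
    (qn : G → ℝ) (hqn_meas : Measurable qn) (hqn_nonneg : ∀ x, 0 ≤ qn x)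
    (hhom : ∀ r : ℝ, 0 < r → ∀ x, qn (D r x) = r * qn x)
    (hpolar : ∀ t : ℝ, Q / 2 < t → Integrable (fun x => (1 + qn x) ^ (-(2 * t))) μ)
    (s : ℝ) (hs : Q / 2 < s) :
    ∃ C > 0, ∀ κ : ℤ → G → ℂ, (∀ j, Measurable (κ j)) →
      ∀ M : ℝ, 0 ≤ M →
      (∀ j : ℤ, eLpNorm (fun x => ((1 + qn x) ^ s : ℝ) * κ j x) 2 μ ≤ ENNReal.ofReal M) →
      ∀ m : ℤ,
        ∑' j : ℤ,
          ∫⁻ x in {x : G | (2 : ℝ) ^ (m : ℝ) ≤ qn x ∧ qn x ≤ (2 : ℝ) ^ ((m : ℝ) + 1)},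
            (‖((2 : ℝ) ^ (-Q * (j : ℝ)) : ℝ) * κ j (D ((2 : ℝ) ^ (-(j : ℝ))) x)‖₊ : ℝ≥0∞) ∂μ
          ≤ ENNReal.ofReal (C * M) :=
  dyadic_kernel_summation_general μ Q hQ D hDscale qn hqn_meas hqn_nonneg hhom hpolar s hs
end
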